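/- For every finite directed graph E (finitely many vertices and edges), the graph monoid M_E is primely generated: every element of M_E is a finite sum of prime elements. -/

import Mathlib

/-!
Firing vertices is a confluent rewriting system on `F_E` that splits over sums: two elements
are congruent iff they have a common descendant, and every descendant of `α + β` is a sum of
descendants of `α` and of `β`. If `v` is a sink or lies on a cycle, every descendant of `v`
contains a vertex from which `v` is reachable, and this makes `a_v` prime. Any other vertex `v`
emits edges whose ranges do not reach back to `v`, so `a_v = Σ a_{r(e)}` is a sum of classes
of vertices with strictly fewer reachable vertices; in a finite graph this descent ends at
sinks and cycle vertices, and the `a_v` generate `M_E`.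
-/

/-- A row-finite directed graph: vertex set `V`, edge set `Edge`,
source and range maps, with every vertex emitting finitely many edges. -/
structure RFGraph where
  V : Type
  Edge : Type
  s : Edge → V
  r : Edge → V
  rowFinite : ∀ v : V, {e : Edge | s e = v}.Finite

namespace RFGraph

/-- The free abelian monoid on the vertex set. -/
abbrev F (G : RFGraph) : Type := G.V →₀ ℕ

/-- `v` emits at least one edge. -/
def emits (G : RFGraph) (v : G.V) : Prop := ∃ e : G.Edge, G.s e = v

/-- `𝐫(v) = Σ_{e ∈ s⁻¹(v)} r(e)` in the free abelian monoid. -/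
noncomputable def rr (G : RFGraph) (v : G.V) : G.F :=
  ∑ e ∈ (G.rowFinite v).toFinset, Finsupp.single (G.r e) 1

/-- The one-step relation `→₁`: `α →₁ β` iff `α = x + α'` for a vertex `x`
emitting at least one edge, and `β = 𝐫(x) + α'`. -/
def step (G : RFGraph) (α β : G.F) : Prop :=
  ∃ (x : G.V) (α' : G.F), G.emits x ∧ α = Finsupp.single x 1 + α' ∧ β = G.rr x + α'

/-- The reflexive-transitive closure `→` of `→₁`. -/
def steps (G : RFGraph) : G.F → G.F → Prop := Relation.ReflTransGen G.step

/-- The additive congruence `∼` on `F_E` generated by `→₁`. -/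
noncomputable def graphCon (G : RFGraph) : AddCon G.F := addConGen G.step

/-- The graph monoid `M_E = F_E/∼`. -/
abbrev M (G : RFGraph) : Type := G.graphCon.Quotient

/-- The class `a_v` of a vertex `v` in the graph monoid. -/
noncomputable def av (G : RFGraph) (v : G.V) : G.M := G.graphCon.mk' (Finsupp.single v 1)

end RFGraph

/-- The algebraic pre-order on the graph monoid: `x ≤ y` iff `∃ z, y = x + z`. -/
def RFGraph.mle (G : RFGraph) (x y : G.M) : Prop := ∃ z : G.M, y = x + z

/-- A prime element of the graph monoid. -/
def RFGraph.IsPrime (G : RFGraph) (p : G.M) : Prop :=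
  ∀ a₁ a₂ : G.M, G.mle p (a₁ + a₂) → G.mle p a₁ ∨ G.mle p a₂

theorem Finsupp.single_one_le_add_iff {α : Type*} {x : α} {f g : α →₀ ℕ} :
    Finsupp.single x 1 ≤ f + g ↔ Finsupp.single x 1 ≤ f ∨ Finsupp.single x 1 ≤ g := by
  simp only [Finsupp.single_le_iff, Finsupp.add_apply]
  omega

namespace RFGraph

variable {G : RFGraph}

lemma single_le_rr (e : G.Edge) : Finsupp.single (G.r e) 1 ≤ G.rr (G.s e) :=
  Finset.single_le_sum (f := fun e => Finsupp.single (G.r e) 1) (fun _ _ => zero_le)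
    (by simp)

lemma step_single {v : G.V} (hv : G.emits v) : G.step (Finsupp.single v 1) (G.rr v) :=
  ⟨v, 0, hv, (add_zero _).symm, (add_zero _).symm⟩

lemma step_add_right {a b : G.F} (h : G.step a b) (c : G.F) : G.step (a + c) (b + c) := by
  obtain ⟨x, α, hx, rfl, rfl⟩ := h
  exact ⟨x, α + c, hx, add_assoc .., add_assoc ..⟩

lemma steps_add_right {a b : G.F} (h : G.steps a b) (c : G.F) : G.steps (a + c) (b + c) :=
  Relation.ReflTransGen.lift (· + c) (fun _ _ hab => step_add_right hab c) _ _ h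

lemma steps_add {a b c d : G.F} (hab : G.steps a b) (hcd : G.steps c d) :
    G.steps (a + c) (b + d) := by
  have hbcd := steps_add_right hcd b
  rw [add_comm c, add_comm d] at hbcd
  exact (steps_add_right hab c).trans hbcd

lemma step_diamond {a b c : G.F} (hab : G.step a b) (hac : G.step a c) :
    ∃ d, Relation.ReflGen G.step b d ∧ G.steps c d := by
  obtain ⟨x, α, hx, rfl, rfl⟩ := hab
  obtain ⟨y, β, hy, hxy_eq, rfl⟩ := hac
  by_cases hxy : x = y
  · subst hxy
    obtain rfl := add_left_cancel hxy_eq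
    exact ⟨_, .refl, .refl⟩
  have hyα : Finsupp.single y 1 ≤ α := by
    have hy_le : Finsupp.single y 1 ≤ Finsupp.single x 1 + α := hxy_eq ▸ le_self_add
    refine (Finsupp.single_one_le_add_iff.mp hy_le).resolve_left ?_
    simp [Finsupp.single_le_iff, hxy]
  obtain ⟨τ, rfl⟩ := exists_add_of_le hyα
  obtain rfl : β = Finsupp.single x 1 + τ :=
    add_left_cancel (a := Finsupp.single y 1) (by rw [← hxy_eq]; abel)
  exact ⟨G.rr x + G.rr y + τ, .single ⟨y, G.rr x + τ, hy, by abel, by abel⟩,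
    .single ⟨x, G.rr y + τ, hx, by abel, by abel⟩⟩

theorem graphCon_iff_join {a b : G.F} : G.graphCon a b ↔ Relation.Join G.steps a b := by
  let joinCon : AddCon G.F :=
    { r := Relation.Join G.steps
      iseqv := Relation.equivalence_join_reflTransGen fun _ _ _ => step_diamond
      add' := fun ⟨x, hax, hbx⟩ ⟨y, hcy, hdy⟩ => ⟨x + y, steps_add hax hcy, steps_add hbx hdy⟩ }
  refine ⟨fun h => AddCon.addConGen_le (c := joinCon).mpr (fun _ b h => ⟨b, .single h, .refl⟩) h, ?_⟩
  exact Relation.join_le_of_equivalence_of_le G.graphCon.iseqv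
    (Relation.reflTransGen_le_of_equivalence_of_le G.graphCon.iseqv
      fun _ _ h => AddConGen.Rel.of _ _ h) a b

lemma mk'_eq_mk'_iff {a b : G.F} :
    G.graphCon.mk' a = G.graphCon.mk' b ↔ Relation.Join G.steps a b :=
  G.graphCon.eq.trans graphCon_iff_join

lemma exists_steps_of_steps_add {α β γ : G.F} (h : G.steps (α + β) γ) :
    ∃ γ₁ γ₂, G.steps α γ₁ ∧ G.steps β γ₂ ∧ γ = γ₁ + γ₂ := by
  induction h with
  | refl => exact ⟨α, β, .refl, .refl, rfl⟩
  | tail _ hstep ih =>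
    obtain ⟨γ₁, γ₂, h₁, h₂, rfl⟩ := ih
    obtain ⟨x, m, hx, hm, rfl⟩ := hstep
    have hx_le : Finsupp.single x 1 ≤ γ₁ + γ₂ := hm ▸ le_self_add
    rcases Finsupp.single_one_le_add_iff.mp hx_le with hx₁ | hx₂
    · obtain ⟨τ, rfl⟩ := exists_add_of_le hx₁
      obtain rfl : m = τ + γ₂ := add_left_cancel (by rw [← hm]; abel)
      exact ⟨G.rr x + τ, γ₂, h₁.tail ⟨x, τ, hx, rfl, rfl⟩, h₂, by abel⟩
    · obtain ⟨τ, rfl⟩ := exists_add_of_le hx₂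
      obtain rfl : m = γ₁ + τ := add_left_cancel (by rw [← hm]; abel)
      exact ⟨γ₁, G.rr x + τ, h₁, h₂.tail ⟨x, τ, hx, rfl, rfl⟩, by abel⟩

def Reaches (G : RFGraph) : G.V → G.V → Prop :=
  Relation.ReflTransGen fun a b => ∃ e, G.s e = a ∧ G.r e = b

def OnCycle (G : RFGraph) (v : G.V) : Prop := ∃ e, G.s e = v ∧ G.Reaches (G.r e) v

lemma exists_steps_single_of_reaches {w v : G.V} (h : G.Reaches w v) :
    ∃ σ, G.steps (Finsupp.single w 1) (Finsupp.single v 1 + σ) := by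
  induction h using Relation.ReflTransGen.head_induction_on with
  | refl => exact ⟨0, by rw [add_zero]; exact .refl⟩
  | head hedge _ ih =>
    obtain ⟨e, rfl, rfl⟩ := hedge
    obtain ⟨σ, hσ⟩ := ih
    obtain ⟨ρ, hρ⟩ := exists_add_of_le (single_le_rr e)
    refine ⟨σ + ρ, .head (step_single ⟨e, rfl⟩) ?_⟩
    rw [hρ, ← add_assoc]
    exact steps_add_right hσ ρ

lemma exists_reaches_of_steps_single {v : G.V} (hv : G.emits v → G.OnCycle v) {δ : G.F}
    (h : G.steps (Finsupp.single v 1) δ) : ∃ w, Finsupp.single w 1 ≤ δ ∧ G.Reaches w v := by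
  induction h with
  | refl => exact ⟨v, le_rfl, .refl⟩
  | tail _ hstep ih =>
    obtain ⟨w, hw, hwv⟩ := ih
    obtain ⟨x, m, hx, rfl, rfl⟩ := hstep
    rcases Finsupp.single_one_le_add_iff.mp hw with hwx | hwm
    -- the witness `w` was fired: pass to the next vertex of a path to `v`, or of the cycle at `v`
    · obtain rfl : w = x := by
        by_contra hne
        simp [Finsupp.single_le_iff, Finsupp.single_eq_of_ne hne] at hwx
      obtain ⟨e, rfl, hev⟩ : ∃ e, G.s e = w ∧ G.Reaches (G.r e) v := by
        rcases Relation.ReflTransGen.cases_head hwv with rfl | ⟨u, ⟨e, he, rfl⟩, hu⟩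
        · exact hv hx
        · exact ⟨e, he, hu⟩
      exact ⟨G.r e, (single_le_rr e).trans le_self_add, hev⟩
    · exact ⟨w, hwm.trans le_add_self, hwv⟩

lemma av_mle_mk'_of_steps {v w : G.V} {α γ : G.F} (hαγ : G.steps α γ)
    (hw : Finsupp.single w 1 ≤ γ) (hwv : G.Reaches w v) :
    G.mle (G.av v) (G.graphCon.mk' α) := by
  obtain ⟨τ, rfl⟩ := exists_add_of_le hw
  obtain ⟨σ, hσ⟩ := exists_steps_single_of_reaches hwv
  refine ⟨G.graphCon.mk' (σ + τ), ?_⟩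
  rw [av, ← map_add, mk'_eq_mk'_iff]
  exact ⟨_, hαγ.trans (steps_add_right hσ τ), by rw [add_assoc]; exact .refl⟩

theorem isPrime_av {v : G.V} (hv : G.emits v → G.OnCycle v) : G.IsPrime (G.av v) := by
  rintro a₁ a₂ ⟨z, hz⟩
  obtain ⟨α₁, rfl⟩ := G.graphCon.mk'_surjective a₁
  obtain ⟨α₂, rfl⟩ := G.graphCon.mk'_surjective a₂
  obtain ⟨ζ, rfl⟩ := G.graphCon.mk'_surjective z
  rw [av, ← map_add, ← map_add, mk'_eq_mk'_iff] at hz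
  obtain ⟨γ, hγ, hvγ⟩ := hz
  obtain ⟨δ, ε, hδ, -, rfl⟩ := exists_steps_of_steps_add hvγ
  obtain ⟨w, hwδ, hwv⟩ := exists_reaches_of_steps_single hv hδ
  obtain ⟨γ₁, γ₂, hγ₁, hγ₂, hγ_eq⟩ := exists_steps_of_steps_add hγ
  rcases Finsupp.single_one_le_add_iff.mp (hγ_eq ▸ hwδ.trans le_self_add) with h₁ | h₂
  · exact .inl (av_mle_mk'_of_steps hγ₁ h₁ hwv)
  · exact .inr (av_mle_mk'_of_steps hγ₂ h₂ hwv)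

lemma av_eq_sum_av_r {v : G.V} (hv : G.emits v) :
    G.av v = ∑ e ∈ (G.rowFinite v).toFinset, G.av (G.r e) := by
  rw [av, mk'_eq_mk'_iff.mpr ⟨_, .single (step_single hv), .refl⟩, rr, map_sum]
  rfl

theorem av_mem_closure_isPrime [Finite G.V] (u : G.V) :
    G.av u ∈ AddSubmonoid.closure {p | G.IsPrime p} := by
  induction u using (InvImage.wf (fun u => {w | G.Reaches u w}) wellFounded_lt).induction with
  | _ u ih =>
  by_cases hu : G.emits u → G.OnCycle u
  · exact AddSubmonoid.subset_closure (isPrime_av hu)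
  push Not at hu
  obtain ⟨hemits, hacyclic⟩ := hu
  rw [av_eq_sum_av_r hemits]
  refine AddSubmonoid.sum_mem _ fun e he => ih _ ?_
  have hse : G.s e = u := by simpa using he
  exact ssubset_of_subset_not_superset (fun w hw => .head ⟨e, hse, rfl⟩ hw)
    fun hsub => hacyclic ⟨e, hse, hsub .refl⟩

lemma mem_closure_range_av (x : G.M) : x ∈ AddSubmonoid.closure (Set.range G.av) := by
  obtain ⟨α, rfl⟩ := G.graphCon.mk'_surjective x
  induction α using Finsupp.induction_linear with
  | zero => rw [map_zero]; exact zero_mem _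
  | add f g hf hg => rw [map_add]; exact add_mem hf hg
  | single v n =>
    rw [← Finsupp.smul_single_one, map_nsmul]
    exact nsmul_mem (AddSubmonoid.subset_closure (Set.mem_range_self v)) n

end RFGraph

theorem stmt3_general (G : RFGraph) [Finite G.V] (x : G.M) :
    ∃ l : Multiset G.M, (∀ p ∈ l, G.IsPrime p) ∧ l.sum = x :=
  AddSubmonoid.exists_multiset_of_mem_closure <|
    AddSubmonoid.closure_le.mpr (Set.range_subset_iff.mpr RFGraph.av_mem_closure_isPrime)
      (RFGraph.mem_closure_range_av x)

/-- For a finite graph, the graph monoid `M_E` is primely generated: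
every element is a (finite) sum of prime elements. -/
theorem stmt3 (G : RFGraph) [Finite G.V] [Finite G.Edge] (x : G.M) :
    ∃ l : Multiset G.M, (∀ p ∈ l, G.IsPrime p) ∧ l.sum = x :=
  stmt3_general G x
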